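/- arXiv:1301.2364 — 6 statements merged into one kernel-verified Lean document; each statement's English description precedes it below -/
import Mathlib

section
/- For integers m ≥ 1 and j ≥ 0, the sum ∑_{k=1}^{j} (-1)^k · C(m, j+k) · (m + (1-2k) · C(m, j-k+1)) equals 0, where binomial coefficients with out-of-range arguments are 0. -/
/-!
Write `m = n + 1`. By absorption, `i * C(n+1, i) = (n+1) * C(n, i-1)`, the factor
`1 - 2k = (j+1-k) - (j+k)` splits `(1 - 2k) C(m, j+k) C(m, j+1-k)` into two terms which, after
reflecting `k ↦ j+1-k` in one of them, together form `(n+1)(-1)^j ∑_{i=1}^{2j} (-1)^i C(n+1, i) C(n, 2j-i)`.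
As the coefficient of `X^{2j}` in `(1-X)^{n+1} (1+X)^n = (1-X)(1-X²)^n`, the full convolution is
`(-1)^j C(n, j)`, and its `i = 0` term is `C(n, 2j)`. The remaining part `m ∑_k (-1)^k C(m, j+k)` is a
difference of partial alternating sums `∑_{i ≤ t} (-1)^i C(n+1, i) = (-1)^t C(n, t)`, and it is
exactly the negative of the first part.
-/

open Finset Polynomial

theorem Polynomial.coeff_one_sub_X_pow {R : Type*} [CommRing R] (n k : ℕ) :
    ((1 - X : R[X]) ^ n).coeff k = (-1) ^ k * n.choose k := by
  have h : (1 - X : R[X]) ^ n = C ((-1) ^ n) * (X + C (-1)) ^ n := by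
    rw [C_pow, ← mul_pow, map_neg, map_one]
    ring
  rw [h, coeff_C_mul, coeff_X_add_C_pow]
  rcases le_or_gt k n with hk | hk
  · obtain ⟨d, rfl⟩ := Nat.exists_eq_add_of_le hk
    have hsq : ((-1 : R) ^ d) * (-1) ^ d = 1 := by rw [← mul_pow]; simp
    rw [Nat.add_sub_cancel_left, pow_add]
    linear_combination ((-1) ^ k * ((k + d).choose k : R)) * hsq
  · simp [Nat.choose_eq_zero_of_lt hk]

theorem sum_range_neg_one_pow_mul_choose_mul_choose (a b n : ℕ) :
    ∑ i ∈ range (n + 1), (-1 : ℤ) ^ i * a.choose i * b.choose (n - i) =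
      ((1 - X : ℤ[X]) ^ a * (1 + X) ^ b).coeff n := by
  rw [coeff_mul, Nat.sum_antidiagonal_eq_sum_range_succ_mk]
  simp only [coeff_one_sub_X_pow, coeff_one_add_X_pow]

theorem Int.alternating_sum_range_succ_choose_mul_choose (n j : ℕ) :
    ∑ i ∈ Finset.range (2 * j + 1), (-1 : ℤ) ^ i * (n + 1).choose i * n.choose (2 * j - i) =
      (-1) ^ j * n.choose j := by
  have hprod : (1 - X : ℤ[X]) ^ (n + 1) * (1 + X) ^ n =
      expand ℤ 2 ((1 - X) ^ n) - expand ℤ 2 ((1 - X) ^ n) * X ^ 1 := by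
    simp only [map_pow, map_sub, map_one, expand_X]
    rw [show (1 - X ^ 2 : ℤ[X]) = (1 - X) * (1 + X) by ring, mul_pow]
    ring
  rw [sum_range_neg_one_pow_mul_choose_mul_choose, hprod, coeff_sub, coeff_mul_X_pow',
    coeff_expand two_pos, coeff_expand two_pos, if_pos (dvd_mul_right 2 j),
    Nat.mul_div_cancel_left j two_pos, coeff_one_sub_X_pow]
  split_ifs <;> omega

theorem Finset.sum_Icc_one_add_eq_sub {G : Type*} [AddCommGroup G] (f : ℕ → G) (j n : ℕ) :
    ∑ k ∈ Icc 1 n, f (j + k) = ∑ i ∈ range (j + n + 1), f i - ∑ i ∈ range (j + 1), f i := by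
  rw [← sum_Ico_eq_sub _ (by omega), ← Ico_add_one_right_eq_Icc,
    show j + n + 1 = n + 1 + j by ring, add_comm j 1, ← sum_Ico_add']
  exact sum_congr rfl fun k _ ↦ by rw [add_comm]

theorem Finset.sum_Icc_one_reflect_eq_sub {G : Type*} [AddCommGroup G] (f : ℕ → G) (n : ℕ) :
    ∑ k ∈ Icc 1 n, f (n + 1 - k) = ∑ i ∈ range (n + 1), f i - f 0 := by
  calc ∑ k ∈ Icc 1 n, f (n + 1 - k) = ∑ k ∈ Icc 1 n, f (0 + k) :=
        sum_nbij' (fun k ↦ n + 1 - k) (fun k ↦ n + 1 - k)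
          (fun k hk ↦ by rw [mem_Icc] at hk ⊢; omega) (fun k hk ↦ by rw [mem_Icc] at hk ⊢; omega)
          (fun k hk ↦ by rw [mem_Icc] at hk; omega) (fun k hk ↦ by rw [mem_Icc] at hk; omega)
          (fun _ _ ↦ by rw [zero_add])
    _ = ∑ i ∈ range (n + 1), f i - f 0 := by rw [sum_Icc_one_add_eq_sub, zero_add, sum_range_one]

theorem neg_one_pow_mul_summand_eq (n j k : ℕ) (hk : 1 ≤ k) (hkj : k ≤ j) :
    (-1 : ℤ) ^ j * ((-1) ^ k * (n + 1).choose (j + k) *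
        (((n + 1 : ℕ) : ℤ) + (1 - 2 * (k : ℤ)) * (n + 1).choose (j - k + 1))) =
      (n + 1) * ((-1) ^ (j + k) * (n + 1).choose (j + k) +
        (-1) ^ (j + k) * (n + 1).choose (j + k) * n.choose (2 * j - (j + k)) +
        (-1) ^ (j + 1 - k) * (n + 1).choose (j + 1 - k) * n.choose (2 * j - (j + 1 - k))) := by
  obtain ⟨q, rfl⟩ := Nat.exists_eq_add_of_le' hk
  obtain ⟨p, rfl⟩ := Nat.exists_eq_add_of_le hkj
  have hl : ((n + 1) * n.choose p : ℤ) = (n + 1).choose (p + 1) * (p + 1) := by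
    exact_mod_cast Nat.add_one_mul_choose_eq n p
  have hr : ((n + 1) * n.choose (2 * q + 1 + p) : ℤ) =
      (n + 1).choose (2 * q + 1 + p + 1) * (2 * q + 1 + p + 1) := by
    exact_mod_cast Nat.add_one_mul_choose_eq n (2 * q + 1 + p)
  have hsq : ((-1 : ℤ) ^ q) ^ 2 = 1 := by rw [← pow_mul, mul_comm, pow_mul]; simp
  rw [show q + 1 + p - (q + 1) + 1 = p + 1 by omega, show q + 1 + p + 1 - (q + 1) = p + 1 by omega,
    show 2 * (q + 1 + p) - (q + 1 + p + (q + 1)) = p by omega,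
    show 2 * (q + 1 + p) - (p + 1) = 2 * q + 1 + p by omega,
    show q + 1 + p + (q + 1) = 2 * q + 1 + p + 1 by omega]
  push_cast
  linear_combination
    (-((-1 : ℤ) ^ q) ^ 2 * (-1) ^ p * ((n + 1).choose (2 * q + 1 + p + 1) : ℤ)) * hl +
      ((-1) ^ p * ((n + 1).choose (p + 1) : ℤ)) * hr -
      ((-1) ^ p * ((n + 1).choose (2 * q + 1 + p + 1) : ℤ) * (n + 1).choose (p + 1) *
        (2 * q + p + 2)) * hsq

theorem stmt_3 (m j : ℕ) (hm : 1 ≤ m) :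
    ∑ k ∈ Finset.Icc 1 j,
      (-1 : ℤ) ^ k * (m.choose (j + k)) *
        ((m : ℤ) + (1 - 2 * (k : ℤ)) * (m.choose (j - k + 1))) = 0 := by
  obtain ⟨M, rfl⟩ : ∃ M, m = M + 1 := ⟨m - 1, by omega⟩
  set a : ℕ → ℤ := fun i ↦ (-1) ^ i * (M + 1).choose i
  set c : ℕ → ℤ := fun i ↦ (-1) ^ i * (M + 1).choose i * M.choose (2 * j - i)
  have ha₁ : ∑ i ∈ range (j + 1), a i = (-1) ^ j * M.choose j :=
    Int.alternating_sum_range_choose_eq_choose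
  have ha₂ : ∑ i ∈ range (2 * j + 1), a i = M.choose (2 * j) := by
    simp [a, Int.alternating_sum_range_choose_eq_choose, pow_mul]
  have hc : ∑ i ∈ range (2 * j + 1), c i = (-1) ^ j * M.choose j :=
    Int.alternating_sum_range_succ_choose_mul_choose M j
  have hc₀ : c 0 = M.choose (2 * j) := by simp [c]
  suffices h : (-1 : ℤ) ^ j * ∑ k ∈ Icc 1 j, (-1 : ℤ) ^ k * ((M + 1).choose (j + k)) *
      (((M + 1 : ℕ) : ℤ) + (1 - 2 * (k : ℤ)) * ((M + 1).choose (j - k + 1))) = 0 by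
    simpa using h
  calc _ = ∑ k ∈ Icc 1 j, ((M : ℤ) + 1) * (a (j + k) + c (j + k) + c (j + 1 - k)) := by
        rw [mul_sum]
        exact sum_congr rfl fun k hk ↦
          neg_one_pow_mul_summand_eq M j k (mem_Icc.1 hk).1 (mem_Icc.1 hk).2
    _ = ((M : ℤ) + 1) * (∑ k ∈ Icc 1 j, a (j + k) + ∑ k ∈ Icc 1 j, c (j + k) +
          ∑ k ∈ Icc 1 j, c (j + 1 - k)) := by
        rw [← mul_sum, sum_add_distrib, sum_add_distrib]
    _ = 0 := by
        rw [sum_Icc_one_add_eq_sub, sum_Icc_one_add_eq_sub, sum_Icc_one_reflect_eq_sub, ← two_mul,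
          ha₁, ha₂, hc, hc₀]
        ring
end

section
/- Let m ≥ 2 be even and define P(x,y) = ∑_{j=0}^{m/2} (-1)^j · C(m, 2j) · x^{m-2j} · y^{2j} and Q(x,y) = (x² + y²)^k for a natural number k ≥ 1. Then for all real x, y: P_x·(Q_y·P_{xy} − Q_x·P_{yy}) + P_y·(Q_x·P_{xy} − Q_y·P_{xx}) = 2·k·m²·(m−1)·(x² + y²)^{k+m−2}, where subscripts denote partial derivatives. -/
/-!
Write `z = x + y i`, so that `P = Re (z ^ m)`. Since `z ↦ z ^ m` is holomorphic, the chain rule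
along the two coordinate lines gives `∂ₓ Re f(z) = Re f'(z)` and `∂_y Re f(z) = Re (i f'(z))`; hence
all partial derivatives of `P` up to order two are real parts of `m z^(m-1)` and `m (m-1) z^(m-2)`
times powers of `i`. With `w = z^(m-2)` the left-hand side becomes
`2 k m² (m-1) (x² + y²)^(k-1) |z w|²`, and `|z w|² = (x² + y²)^(m-1)`.
-/

/-- Partial derivative with respect to the first variable. -/
noncomputable def pdx (f : ℝ → ℝ → ℝ) (x y : ℝ) : ℝ := deriv (fun x' => f x' y) x

/-- Partial derivative with respect to the second variable. -/
noncomputable def pdy (f : ℝ → ℝ → ℝ) (x y : ℝ) : ℝ := deriv (fun y' => f x y') y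

open Complex Finset

lemma Finset.sum_range_succ_eq_sum_two_mul_of_odd_eq_zero {M : Type*} [AddCommMonoid M]
    {g : ℕ → M} (hg : ∀ j, g (2 * j + 1) = 0) (n : ℕ) :
    ∑ i ∈ range (n + 1), g i = ∑ j ∈ range (n / 2 + 1), g (2 * j) := by
  rw [← sum_image (g := fun j => 2 * j) (fun a _ b _ h => by simp only at h; omega)]
  refine (sum_subset ?_ fun i hin hi => ?_).symm
  · intro i
    simp only [mem_image, mem_range]
    rintro ⟨j, hj, rfl⟩
    omega
  · obtain ⟨j, rfl | rfl⟩ := Nat.even_or_odd' i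
    · exact absurd (mem_image.2 ⟨j, mem_range.2 (by grind), rfl⟩) hi
    · exact hg j

lemma Complex.I_pow_two_mul_re (j : ℕ) : (I ^ (2 * j)).re = (-1) ^ j := by
  rw [pow_mul, I_sq]
  norm_cast

lemma Complex.I_pow_two_mul_add_one_re (j : ℕ) : (I ^ (2 * j + 1)).re = 0 := by
  rw [pow_succ, pow_mul, I_sq, mul_I_re, neg_eq_zero]
  norm_cast

lemma Complex.add_mul_I_pow_re (x y : ℝ) (n : ℕ) :
    ((x + y * I) ^ n).re = ∑ j ∈ range (n / 2 + 1),
      (-1 : ℝ) ^ j * n.choose (2 * j) * x ^ (n - 2 * j) * y ^ (2 * j) := by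
  have hterm (i : ℕ) : ((y * I) ^ i * (x : ℂ) ^ (n - i) * n.choose i).re
      = y ^ i * x ^ (n - i) * n.choose i * (I ^ i).re := by
    rw [← re_ofReal_mul]
    push_cast
    ring_nf
  rw [add_comm, add_pow, re_sum]
  simp only [hterm]
  rw [sum_range_succ_eq_sum_two_mul_of_odd_eq_zero fun j => by
    rw [I_pow_two_mul_add_one_re, mul_zero]]
  refine sum_congr rfl fun j _ => ?_
  rw [I_pow_two_mul_re]
  ring

section

variable {f : ℂ → ℂ} {f' : ℂ → ℂ}

lemma pdx_re_comp_add_mul_I (hf : ∀ z, HasDerivAt f (f' z) z) :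
    pdx (fun x y => (f (x + y * I)).re) = fun (x y : ℝ) => (f' (x + y * I)).re := by
  funext x y
  exact ((hf _).comp_add_const (x : ℂ) (y * I)).real_of_complex.deriv

lemma pdy_re_comp_add_mul_I (hf : ∀ z, HasDerivAt f (f' z) z) :
    pdy (fun x y => (f (x + y * I)).re) = fun (x y : ℝ) => (f' (x + y * I) * I).re := by
  funext x y
  have hline : HasDerivAt (fun w : ℂ => (x : ℂ) + w * I) I y := by
    simpa using ((hasDerivAt_id (y : ℂ)).mul_const I).const_add (x : ℂ)
  exact ((hf _).comp (y : ℂ) hline).real_of_complex.deriv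

end

lemma pdx_sq_add_sq_pow (k : ℕ) :
    pdx (fun x y => (x ^ 2 + y ^ 2) ^ k) =
      fun (x y : ℝ) => k * (x ^ 2 + y ^ 2) ^ (k - 1) * (2 * x) := by
  funext x y
  exact (((hasDerivAt_pow 2 x).add_const (y ^ 2)).pow k).deriv.trans (by norm_num)

lemma pdy_sq_add_sq_pow (k : ℕ) :
    pdy (fun x y => (x ^ 2 + y ^ 2) ^ k) =
      fun (x y : ℝ) => k * (x ^ 2 + y ^ 2) ^ (k - 1) * (2 * y) := by
  funext x y
  exact (((hasDerivAt_pow 2 y).const_add (x ^ 2)).pow k).deriv.trans (by norm_num)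

theorem stmt_10_general (m k : ℕ) (hm : 2 ≤ m) (hk : 1 ≤ k)
    (P Q : ℝ → ℝ → ℝ)
    (hP : ∀ x y : ℝ, P x y =
      ∑ j ∈ Finset.range (m / 2 + 1),
        (-1 : ℝ) ^ j * (m.choose (2 * j)) * x ^ (m - 2 * j) * y ^ (2 * j))
    (hQ : ∀ x y : ℝ, Q x y = (x ^ 2 + y ^ 2) ^ k) :
    ∀ x y : ℝ,
      pdx P x y * (pdy Q x y * pdy (pdx P) x y - pdx Q x y * pdy (pdy P) x y) +
        pdy P x y * (pdx Q x y * pdy (pdx P) x y - pdy Q x y * pdx (pdx P) x y) =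
      2 * (k : ℝ) * (m : ℝ) ^ 2 * ((m : ℝ) - 1) * (x ^ 2 + y ^ 2) ^ (k + m - 2) := by
  obtain ⟨M, rfl⟩ : ∃ M, m = M + 2 := ⟨m - 2, by omega⟩
  obtain ⟨K, rfl⟩ : ∃ K, k = K + 1 := ⟨k - 1, by omega⟩
  obtain rfl : P = fun (x y : ℝ) => (((x : ℂ) + y * I) ^ (M + 2)).re :=
    funext₂ fun x y => by rw [hP, add_mul_I_pow_re]
  obtain rfl : Q = fun x y => (x ^ 2 + y ^ 2) ^ (K + 1) := funext₂ hQ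
  have hd₁ (z : ℂ) : HasDerivAt (· ^ (M + 2)) (((M + 2 : ℕ) : ℂ) * z ^ (M + 1)) z :=
    hasDerivAt_pow _ z
  have hd₂ (z : ℂ) : HasDerivAt (fun z => ((M + 2 : ℕ) : ℂ) * z ^ (M + 1))
      (((M + 2 : ℕ) : ℂ) * (((M + 1 : ℕ) : ℂ) * z ^ M)) z :=
    (hasDerivAt_pow _ z).const_mul _
  intro x y
  rw [pdx_re_comp_add_mul_I hd₁, pdy_re_comp_add_mul_I hd₁, pdx_re_comp_add_mul_I hd₂,
    pdy_re_comp_add_mul_I hd₂, pdy_re_comp_add_mul_I fun z => (hd₂ z).mul_const I,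
    pdx_sq_add_sq_pow, pdy_sq_add_sq_pow]
  have hw : ((x + y * I) ^ M).re * ((x + y * I) ^ M).re
      + ((x + y * I) ^ M).im * ((x + y * I) ^ M).im = (x ^ 2 + y ^ 2) ^ M := by
    rw [← normSq_apply, map_pow, normSq_add_mul_I]
  rw [show K + 1 + (M + 2) - 2 = K + M + 1 by omega]
  simp only [pow_succ' _ M, mul_re, mul_im, I_re, I_im, natCast_re, natCast_im, add_re, add_im,
    ofReal_re, ofReal_im, Nat.add_sub_cancel]
  push_cast
  linear_combination 2 * ((K : ℝ) + 1) * ((M : ℝ) + 2) ^ 2 * ((M : ℝ) + 1) * (x ^ 2 + y ^ 2) ^ K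
    * (x ^ 2 + y ^ 2) * hw

theorem stmt_10 (m k : ℕ) (hm : 2 ≤ m) (hme : Even m) (hk : 1 ≤ k)
    (P Q : ℝ → ℝ → ℝ)
    (hP : ∀ x y : ℝ, P x y =
      ∑ j ∈ Finset.range (m / 2 + 1),
        (-1 : ℝ) ^ j * (m.choose (2 * j)) * x ^ (m - 2 * j) * y ^ (2 * j))
    (hQ : ∀ x y : ℝ, Q x y = (x ^ 2 + y ^ 2) ^ k) :
    ∀ x y : ℝ,
      pdx P x y * (pdy Q x y * pdy (pdx P) x y - pdx Q x y * pdy (pdy P) x y) +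
        pdy P x y * (pdx Q x y * pdy (pdx P) x y - pdy Q x y * pdx (pdx P) x y) =
      2 * (k : ℝ) * (m : ℝ) ^ 2 * ((m : ℝ) - 1) * (x ^ 2 + y ^ 2) ^ (k + m - 2) :=
  stmt_10_general m k hm hk P Q hP hQ
end

section
/- Let m ≥ 2 be even, P(x,y) = Re((x+iy)^m) and Q(x,y) = (x²+y²)^k with k ≥ 1. Then the quantity ∇P·HessP·(∇Q)^t = P_{xx}·P_y·Q_y + P_{yy}·P_x·Q_x − P_{xy}·(P_x·Q_y + P_y·Q_x) is ≤ 0 at every point of the plane. -/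
/-!
Write `z = x + iy` and `P = Re f(z)` with `f` holomorphic. By the Cauchy–Riemann equations
`P_x = Re f'`, `P_y = Re (i f')`, `P_xx = -P_yy = Re f''` and `P_xy = Re (i f'')`, which turns
`∇P·HessP·(∇Q)^t` into `-Re (conj f'' · f' · (Q_x - i Q_y))`. For radial `Q = g(x² + y²)` one has
`Q_x - i Q_y = 2 g' · conj z`, and for `f = z^m` the product
`conj (m(m-1) z^(m-2)) · m z^(m-1) · conj z = m²(m-1) |z^(m-1)|²` is a nonnegative real, so the
form equals `-2 g' m²(m-1) |z|^(2(m-1))`, which is `≤ 0` as soon as `g` is nondecreasing.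
-/

open Complex ComplexConjugate

noncomputable def hamiltonianHessianForm (P Q : ℝ → ℝ → ℝ) (x y : ℝ) : ℝ :=
  pdx (pdx P) x y * pdy P x y * pdy Q x y +
    pdy (pdy P) x y * pdx P x y * pdx Q x y -
    pdy (pdx P) x y * (pdx P x y * pdy Q x y + pdy P x y * pdx Q x y)

section ReHolomorphic

variable {f f' f'' : ℂ → ℂ}

theorem pdx_re_comp (hf : ∀ z, HasDerivAt f (f' z) z) :
    pdx (fun x y : ℝ => (f (x + y * I)).re) = fun x y : ℝ => (f' (x + y * I)).re := by
  ext x y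
  have h : HasDerivAt (fun w : ℂ => f (w + y * I)) (f' (x + y * I)) x :=
    (hf _).comp_add_const (x : ℂ) (y * I)
  exact h.real_of_complex.deriv

theorem pdy_re_comp (hf : ∀ z, HasDerivAt f (f' z) z) :
    pdy (fun x y : ℝ => (f (x + y * I)).re) = fun x y : ℝ => (f' (x + y * I) * I).re := by
  ext x y
  have h : HasDerivAt (fun w : ℂ => f (x + w * I)) (f' (x + y * I) * I) y :=
    (hf _).comp (y : ℂ) ((hasDerivAt_mul_const I).const_add (x : ℂ))
  exact h.real_of_complex.deriv

theorem hamiltonianHessianForm_re_comp (hf : ∀ z, HasDerivAt f (f' z) z)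
    (hf' : ∀ z, HasDerivAt f' (f'' z) z) (Q : ℝ → ℝ → ℝ) (x y : ℝ) :
    hamiltonianHessianForm (fun x y : ℝ => (f (x + y * I)).re) Q x y =
      -(conj (f'' (x + y * I)) * f' (x + y * I) * (pdx Q x y - pdy Q x y * I)).re := by
  have hf'I : ∀ z, HasDerivAt (fun w => f' w * I) (f'' z * I) z := fun z => (hf' z).mul_const I
  rw [hamiltonianHessianForm, pdx_re_comp hf, pdy_re_comp hf, pdx_re_comp hf', pdy_re_comp hf',
    pdy_re_comp hf'I]
  simp only [mul_re, mul_im, sub_re, sub_im, conj_re, conj_im, I_re, I_im, ofReal_re, ofReal_im]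
  ring

end ReHolomorphic

section Radial

variable {g g' : ℝ → ℝ}

theorem pdx_radial (hg : ∀ r, HasDerivAt g (g' r) r) (x y : ℝ) :
    pdx (fun x y => g (x ^ 2 + y ^ 2)) x y = g' (x ^ 2 + y ^ 2) * (2 * x) := by
  refine ((hg _).comp x ((hasDerivAt_pow 2 x).add_const (y ^ 2))).deriv.trans ?_
  norm_num

theorem pdy_radial (hg : ∀ r, HasDerivAt g (g' r) r) (x y : ℝ) :
    pdy (fun x y => g (x ^ 2 + y ^ 2)) x y = g' (x ^ 2 + y ^ 2) * (2 * y) := by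
  refine ((hg _).comp y ((hasDerivAt_pow 2 y).const_add (x ^ 2))).deriv.trans ?_
  norm_num

theorem pdx_sub_pdy_mul_I_radial (hg : ∀ r, HasDerivAt g (g' r) r) (x y : ℝ) :
    (pdx (fun x y => g (x ^ 2 + y ^ 2)) x y : ℂ) - pdy (fun x y => g (x ^ 2 + y ^ 2)) x y * I =
      2 * g' (x ^ 2 + y ^ 2) * conj (x + y * I) := by
  rw [pdx_radial hg, pdy_radial hg]
  simp only [map_add, map_mul, conj_ofReal, conj_I]
  push_cast
  ring

end Radial

theorem conj_deriv2_mul_deriv_mul_conj_pow {m : ℕ} (hm : 2 ≤ m) (z : ℂ) :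
    conj ((m : ℂ) * ((m - 1 : ℕ) * z ^ (m - 1 - 1))) * ((m : ℂ) * z ^ (m - 1)) * conj z =
      ((m ^ 2 * (m - 1 : ℕ) * normSq (z ^ (m - 1)) : ℝ) : ℂ) := by
  have hpow : conj z ^ (m - 1 - 1) * conj z = conj z ^ (m - 1) := by
    rw [← pow_succ]
    congr 1
    omega
  rw [ofReal_mul, ← mul_conj, map_pow, ← hpow]
  simp only [map_mul, map_pow, map_natCast]
  push_cast
  ring

theorem hamiltonianHessianForm_re_pow_radial_nonpos {g g' : ℝ → ℝ} {m : ℕ} (hm : 2 ≤ m)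
    (hg : ∀ r, HasDerivAt g (g' r) r) (hg' : ∀ r, 0 ≤ r → 0 ≤ g' r) (x y : ℝ) :
    hamiltonianHessianForm (fun x y : ℝ => ((x + y * I) ^ m).re)
      (fun x y => g (x ^ 2 + y ^ 2)) x y ≤ 0 := by
  have hf : ∀ z : ℂ, HasDerivAt (· ^ m) ((m : ℂ) * z ^ (m - 1)) z := fun z => hasDerivAt_pow m z
  have hf' : ∀ z : ℂ, HasDerivAt (fun z => (m : ℂ) * z ^ (m - 1))
      ((m : ℂ) * ((m - 1 : ℕ) * z ^ (m - 1 - 1))) z :=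
    fun z => (hasDerivAt_pow (m - 1) z).const_mul _
  refine (hamiltonianHessianForm_re_comp hf hf' _ x y).trans_le ?_
  set z : ℂ := x + y * I
  have hz : conj ((m : ℂ) * ((m - 1 : ℕ) * z ^ (m - 1 - 1))) * ((m : ℂ) * z ^ (m - 1)) *
      (2 * g' (x ^ 2 + y ^ 2) * conj z) =
      ((2 * g' (x ^ 2 + y ^ 2) * (m ^ 2 * (m - 1 : ℕ) * normSq (z ^ (m - 1))) : ℝ) : ℂ) := by
    rw [ofReal_mul, ← conj_deriv2_mul_deriv_mul_conj_pow hm]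
    push_cast
    ring
  rw [pdx_sub_pdy_mul_I_radial hg, hz, ofReal_re, neg_nonpos]
  have := hg' (x ^ 2 + y ^ 2) (by positivity)
  have := normSq_nonneg (z ^ (m - 1))
  positivity

theorem stmt_11_general (m k : ℕ) (hm : 2 ≤ m)
    (P Q : ℝ → ℝ → ℝ)
    (hP : ∀ x y : ℝ, P x y = ((x + y * Complex.I) ^ m).re)
    (hQ : ∀ x y : ℝ, Q x y = (x ^ 2 + y ^ 2) ^ k) :
    ∀ x y : ℝ,
      pdx (pdx P) x y * pdy P x y * pdy Q x y +
        pdy (pdy P) x y * pdx P x y * pdx Q x y -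
        pdy (pdx P) x y * (pdx P x y * pdy Q x y + pdy P x y * pdx Q x y) ≤ 0 := by
  intro x y
  obtain rfl : P = fun x y : ℝ => ((x + y * I) ^ m).re := funext₂ hP
  obtain rfl : Q = fun x y : ℝ => (x ^ 2 + y ^ 2) ^ k := funext₂ hQ
  exact hamiltonianHessianForm_re_pow_radial_nonpos hm
    (fun r => hasDerivAt_pow k r) (fun r hr => by positivity) x y

theorem stmt_11 (m k : ℕ) (hm : 2 ≤ m) (hme : Even m) (hk : 1 ≤ k)
    (P Q : ℝ → ℝ → ℝ)
    (hP : ∀ x y : ℝ, P x y = ((x + y * Complex.I) ^ m).re)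
    (hQ : ∀ x y : ℝ, Q x y = (x ^ 2 + y ^ 2) ^ k) :
    ∀ x y : ℝ,
      pdx (pdx P) x y * pdy P x y * pdy Q x y +
        pdy (pdy P) x y * pdx P x y * pdx Q x y -
        pdy (pdx P) x y * (pdx P x y * pdy Q x y + pdy P x y * pdx Q x y) ≤ 0 :=
  stmt_11_general m k hm P Q hP hQ
end

section
/- Let n = m + 2k with m > max(2, k), k ≥ 1, and let F(φ) = cos(mφ). Then for all real φ: n²·F(φ)² + n·F(φ)·F''(φ) − (n−1)·F'(φ)² < 0. -/
theorem stmt_14 (m k n : ℕ) (hk : 1 ≤ k) (hm : m > max 2 k) (hn : n = m + 2 * k)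
    (F : ℝ → ℝ) (hF : ∀ φ : ℝ, F φ = Real.cos (m * φ)) :
    ∀ φ : ℝ,
      (n : ℝ) ^ 2 * F φ ^ 2 + (n : ℝ) * F φ * deriv (deriv F) φ -
        ((n : ℝ) - 1) * (deriv F φ) ^ 2 < 0 := by
  have hFfun : F = fun φ => Real.cos ((m:ℝ) * φ) := funext hF
  subst hFfun
  have hlin : ∀ x : ℝ, HasDerivAt (fun φ : ℝ => (m:ℝ) * φ) (m:ℝ) x := by
    intro x; simpa using (hasDerivAt_id x).const_mul (m:ℝ)
  have hd1 : deriv (fun φ : ℝ => Real.cos ((m:ℝ) * φ)) = fun φ => -(m:ℝ) * Real.sin ((m:ℝ)*φ) := by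
    funext x
    have := (hlin x).cos
    simpa [mul_comm] using this.deriv
  have hd2 : deriv (deriv (fun φ : ℝ => Real.cos ((m:ℝ) * φ))) = fun x => -(m:ℝ)^2 * Real.cos ((m:ℝ)*x) := by
    rw [hd1]
    funext x
    have := ((hlin x).sin.const_mul (-(m:ℝ))).deriv
    rw [this]; ring
  intro φ
  rw [hd2, hd1]
  simp only
  set c := Real.cos ((m:ℝ)*φ) with hc
  set s := Real.sin ((m:ℝ)*φ) with hs
  have hsc : s^2 + c^2 = 1 := Real.sin_sq_add_cos_sq _
  have hc2 : c^2 ≤ 1 := by nlinarith [sq_nonneg s]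
  have hk' : (1:ℝ) ≤ k := by exact_mod_cast hk
  have hmk' : (k:ℝ) < m := by exact_mod_cast lt_of_le_of_lt (le_max_right 2 k) hm
  have hm3' : (3:ℝ) ≤ m := by exact_mod_cast Nat.succ_le_of_lt (lt_of_le_of_lt (le_max_left 2 k) hm)
  have hn' : (n:ℝ) = m + 2*k := by rw [hn]; push_cast; ring
  have key : (n:ℝ)^2 - (m:ℝ)^2 < ((n:ℝ) - 1) * (m:ℝ)^2 := by
    rw [hn']; nlinarith [sq_nonneg ((m:ℝ) - k), sq_nonneg ((m:ℝ) - 1)]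
  have hnm : (0:ℝ) ≤ (n:ℝ)^2 - (m:ℝ)^2 := by
    rw [hn']; nlinarith
  nlinarith [sq_nonneg s, mul_le_of_le_one_left hnm hc2]
end

section
/- Let ω = (ω₁, ω₂, ω₃) and δ = (δ₁, δ₂, δ₃) represent quadratic forms A dx² + 2B dxdy + C dy² at a point. Suppose ω₂² − ω₁ω₃ > 0 (ω hyperbolic), (ω₂+δ₂)² − (ω₁+δ₁)(ω₃+δ₃) > 0 (ω+δ hyperbolic), and δ₂² − δ₁δ₃ ≤ 0 (δ non-hyperbolic). Then for every t ∈ [0,1], (ω₂+tδ₂)² − (ω₁+tδ₁)(ω₃+tδ₃) > 0. -/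
theorem stmt_17 (ω₁ ω₂ ω₃ δ₁ δ₂ δ₃ : ℝ)
    (hω : ω₂ ^ 2 - ω₁ * ω₃ > 0)
    (hωδ : (ω₂ + δ₂) ^ 2 - (ω₁ + δ₁) * (ω₃ + δ₃) > 0)
    (hδ : δ₂ ^ 2 - δ₁ * δ₃ ≤ 0) :
    ∀ t : ℝ, t ∈ Set.Icc (0 : ℝ) 1 →
      (ω₂ + t * δ₂) ^ 2 - (ω₁ + t * δ₁) * (ω₃ + t * δ₃) > 0 := by
  rintro t ⟨h0, h1⟩
  nlinarith [mul_nonneg h0 (sub_nonneg.2 h1), mul_nonneg h0 (mul_pos hω hωδ).le,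
    mul_nonneg (mul_nonneg h0 (sub_nonneg.2 h1)) (neg_nonneg.2 hδ),
    mul_nonneg h0 hω.le, mul_nonneg (sub_nonneg.2 h1) hω.le, mul_nonneg h0 hωδ.le]
end

section
/- For an even natural number m = 2r and integers 1 ≤ j ≤ r − 1, setting n = r − j, the identity (−1)^n · ∑_{k=0}^{n} (4k − 2n + 1) · C(m, 2k+1) · C(m, 2n−2k) = m · C(m−1, n) holds. -/
/-!
With `i = 2k + 1` and `j = 2n - 2k` the weight `4k - 2n + 1` is `i - j`. As `i + j = 2n + 1` is
odd, the terms `(i, j)` and `(j, i)` of `∑_{i+j=2n+1} (-1)^i (i - j) C(m,i) C(m,j)` are equal, so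
this alternating sum is `-2` times the sum of the theorem. It is the coefficient of `X^(2n+1)` in
`X (P'Q - PQ')` for `P = (1 - X)^m`, `Q = (1 + X)^m`, and `P'Q - PQ' = -2m (1 - X²)^(m-1)`, whose
coefficient of `X^(2n)` is `(-1)^n C(m-1,n)`.
-/

open Polynomial Finset

namespace Polynomial

variable {R : Type*}

theorem coeff_X_mul_derivative [Semiring R] (p : R[X]) (i : ℕ) :
    (X * derivative p).coeff i = i * p.coeff i := by
  cases i with
  | zero => simp
  | succ i => rw [coeff_X_mul, coeff_derivative, ← Nat.cast_succ, Nat.cast_comm]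

theorem coeff_one_sub_X_pow_s19 [CommRing R] (n k : ℕ) :
    ((1 - X : R[X]) ^ n).coeff k = (-1) ^ k * n.choose k := by
  have h : (1 - X : R[X]) ^ n = ∑ i ∈ range (n + 1), C ((-1) ^ i * n.choose i : R) * X ^ i := by
    rw [sub_eq_neg_add, add_pow]
    refine sum_congr rfl fun i _ => ?_
    rw [neg_pow (X : R[X]), one_pow, mul_one, C_mul, C_pow, C_neg, C_1, map_natCast]
    ring
  rw [h, finsetSum_coeff]
  simp only [coeff_C_mul_X_pow, sum_ite_eq, mem_range]
  split_ifs with hk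
  · rfl
  · rw [Nat.choose_eq_zero_of_lt (by omega), Nat.cast_zero, mul_zero]

theorem coeff_one_sub_X_sq_pow_two_mul [CommRing R] (n k : ℕ) :
    ((1 - X ^ 2 : R[X]) ^ n).coeff (2 * k) = (-1) ^ k * n.choose k := by
  have h : (1 - X ^ 2 : R[X]) ^ n = expand R 2 ((1 - X) ^ n) := by simp
  rw [h, coeff_expand_mul' two_pos, coeff_one_sub_X_pow_s19]

theorem derivative_one_sub_X_pow_mul_sub [CommRing R] (m : ℕ) :
    derivative ((1 - X : R[X]) ^ m) * (1 + X) ^ m - (1 - X) ^ m * derivative ((1 + X) ^ m)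
      = C (-2 * m : R) * (1 - X ^ 2) ^ (m - 1) := by
  cases m with
  | zero => simp
  | succ m =>
    rw [derivative_pow_succ, derivative_pow_succ, Nat.add_sub_cancel,
      show (1 - X ^ 2 : R[X]) = (1 - X) * (1 + X) by ring, mul_pow]
    simp only [derivative_sub, derivative_add, derivative_one, derivative_X, C_mul, C_neg,
      C_add, C_1, C_ofNat, map_natCast]
    push_cast
    ring

end Polynomial

theorem Finset.sum_range_two_mul {M : Type*} [AddCommMonoid M] (f : ℕ → M) (n : ℕ) :
    ∑ i ∈ range (2 * n), f i = ∑ k ∈ range n, (f (2 * k) + f (2 * k + 1)) := by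
  induction n with
  | zero => simp
  | succ n ih => rw [mul_add, sum_range_succ, sum_range_succ, sum_range_succ, ih, add_assoc]

theorem Finset.Nat.sum_antidiagonal_two_mul_add_one {M : Type*} [AddCommMonoid M]
    (f : ℕ → ℕ → M) (n : ℕ) :
    ∑ p ∈ antidiagonal (2 * n + 1), f p.1 p.2
      = ∑ k ∈ range (n + 1), (f (2 * n - 2 * k) (2 * k + 1) + f (2 * k + 1) (2 * n - 2 * k)) := by
  rw [Nat.sum_antidiagonal_eq_sum_range_succ f, Nat.succ_eq_add_one,
    show 2 * n + 1 + 1 = 2 * (n + 1) by ring, sum_range_two_mul, sum_add_distrib, sum_add_distrib]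
  congr 1
  · rw [← sum_range_reflect]
    refine sum_congr rfl fun k hk => ?_
    have := mem_range.1 hk
    rw [show 2 * (n + 1 - 1 - k) = 2 * n - 2 * k by omega,
      show 2 * n + 1 - (2 * n - 2 * k) = 2 * k + 1 by omega]
  · refine sum_congr rfl fun k _ => ?_
    rw [show 2 * n + 1 - (2 * k + 1) = 2 * n - 2 * k by omega]

theorem sum_antidiagonal_neg_one_pow_mul_sub_mul_choose_mul_choose (m n : ℕ) :
    ∑ p ∈ antidiagonal (2 * n + 1),
        (-1 : ℤ) ^ p.1 * ((p.1 : ℤ) - p.2) * m.choose p.1 * m.choose p.2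
      = -2 * m * ((-1) ^ n * (m - 1).choose n) := by
  set P : ℤ[X] := (1 - X) ^ m
  set Q : ℤ[X] := (1 + X) ^ m
  calc _ = (X * derivative P * Q - P * (X * derivative Q)).coeff (2 * n + 1) := by
        rw [coeff_sub, coeff_mul, coeff_mul, ← sum_sub_distrib]
        simp only [coeff_X_mul_derivative, P, Q, coeff_one_sub_X_pow_s19, coeff_one_add_X_pow]
        exact sum_congr rfl fun _ _ => by ring
    _ = (X * (derivative P * Q - P * derivative Q)).coeff (2 * n + 1) := by ring_nf
    _ = _ := by
        rw [derivative_one_sub_X_pow_mul_sub, mul_left_comm, coeff_C_mul, coeff_X_mul,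
          coeff_one_sub_X_sq_pow_two_mul, mul_assoc]

theorem sum_antidiagonal_neg_one_pow_mul_sub_mul_choose_mul_choose_eq_sum_range (m n : ℕ) :
    ∑ p ∈ antidiagonal (2 * n + 1),
        (-1 : ℤ) ^ p.1 * ((p.1 : ℤ) - p.2) * m.choose p.1 * m.choose p.2
      = -2 * ∑ k ∈ range (n + 1),
          (4 * (k : ℤ) - 2 * n + 1) * m.choose (2 * k + 1) * m.choose (2 * n - 2 * k) := by
  rw [Finset.Nat.sum_antidiagonal_two_mul_add_one
    (fun i j => (-1 : ℤ) ^ i * ((i : ℤ) - j) * m.choose i * m.choose j), mul_sum]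
  refine sum_congr rfl fun k hk => ?_
  have hkn : 2 * k ≤ 2 * n := by have := mem_range.1 hk; omega
  rw [Even.neg_one_pow ⟨n - k, by omega⟩, Odd.neg_one_pow ⟨k, rfl⟩]
  push_cast [Nat.cast_sub hkn]
  ring

theorem stmt_19_general (m n : ℕ) :
    (-1 : ℤ) ^ n *
      ∑ k ∈ Finset.range (n + 1),
        (4 * (k : ℤ) - 2 * (n : ℤ) + 1) * (m.choose (2 * k + 1)) *
          (m.choose (2 * n - 2 * k)) =
    (m : ℤ) * ((m - 1).choose n) := by
  have hsum : ∑ k ∈ Finset.range (n + 1),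
      (4 * (k : ℤ) - 2 * (n : ℤ) + 1) * (m.choose (2 * k + 1)) * (m.choose (2 * n - 2 * k))
        = m * ((-1) ^ n * (m - 1).choose n) := by
    refine mul_left_cancel₀ (show (-2 : ℤ) ≠ 0 by norm_num) ?_
    rw [← sum_antidiagonal_neg_one_pow_mul_sub_mul_choose_mul_choose_eq_sum_range,
      sum_antidiagonal_neg_one_pow_mul_sub_mul_choose_mul_choose, mul_assoc]
  have hsign : (-1 : ℤ) ^ n * (-1) ^ n = 1 := by rw [← mul_pow]; norm_num
  rw [hsum]
  linear_combination (m * ((m - 1).choose n : ℤ)) * hsign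

theorem stmt_19 (r j : ℕ) (hj1 : 1 ≤ j) (hj2 : j ≤ r - 1) (m n : ℕ)
    (hm : m = 2 * r) (hn : n = r - j) :
    (-1 : ℤ) ^ n *
      ∑ k ∈ Finset.range (n + 1),
        (4 * (k : ℤ) - 2 * (n : ℤ) + 1) * (m.choose (2 * k + 1)) *
          (m.choose (2 * n - 2 * k)) =
    (m : ℤ) * ((m - 1).choose n) :=
  stmt_19_general m n
end
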